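/- arXiv:1001.0622 — 3 statements merged into one kernel-verified Lean document; each statement's English description precedes it below -/
import Mathlib

section
/- The product ⊙ has no zero divisors: for A ∈ M(p,p';F) and B ∈ M(q,q';F), one has A⊙B = 0 if and only if A = 0 or B = 0. -/
open scoped BigOperators ENNReal

noncomputable section

/-- The degree `|α|` of a multi-index `α ∈ ℕ^n`. -/
def mdeg {n : ℕ} (α : Fin n → ℕ) : ℕ := ∑ i, α i

/-- The factorial `α! = α₁! ⋯ αₙ!` of a multi-index. -/
def mfact {n : ℕ} (α : Fin n → ℕ) : ℕ := ∏ i, (α i).factorial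

/-- The multi-indices in `ℕ^n` of degree `p`. -/
abbrev MIdx (n p : ℕ) := {α : Fin n → ℕ // mdeg α = p}

instance (n p : ℕ) : Fintype (MIdx n p) :=
  Fintype.subtype (Finset.Nat.antidiagonalTuple n p) (fun α => by
    simp [Finset.Nat.mem_antidiagonalTuple, mdeg])

/-- The space `M(p,p';F)` of matrices with rows indexed by degree-`p` multi-indices in `ℕ^n`
and columns indexed by degree-`p'` multi-indices in `ℕ^n'`. -/
abbrev MMat (n n' p p' : ℕ) (F : Type*) := MIdx n p → MIdx n' p' → F

lemma mdeg_sub {n p q : ℕ} (α : MIdx n (p + q)) (β : MIdx n p) (h : ∀ i, β.1 i ≤ α.1 i) :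
    mdeg (α.1 - β.1) = q := by
  have h1 : mdeg (α.1 - β.1) + mdeg β.1 = mdeg α.1 := by
    simp only [mdeg, ← Finset.sum_add_distrib]
    exact Finset.sum_congr rfl fun i _ => Nat.sub_add_cancel (h i)
  have h2 := α.2
  have h3 := β.2
  omega

/-- The product `⊙` of `A ∈ M(p,p';F)` and `B ∈ M(q,q';F)`:
`(A⊙B)_{α,α'} = Σ_{β≤α, β'≤α', |β|=p, |β'|=p'} (α!/(β!(α−β)!)) A_{β,β'} B_{α−β,α'−β'}`. -/
def oprod {n n' p p' q q' : ℕ} {F : Type*} [RCLike F]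
    (A : MMat n n' p p' F) (B : MMat n n' q q' F) : MMat n n' (p + q) (p' + q') F :=
  fun α α' =>
    ∑ β : MIdx n p, ∑ β' : MIdx n' p',
      if h : (∀ i, β.1 i ≤ α.1 i) ∧ (∀ j, β'.1 j ≤ α'.1 j) then
        ((mfact α.1 : F) / ((mfact β.1 : F) * (mfact (α.1 - β.1) : F))) * A β β' *
          B ⟨α.1 - β.1, mdeg_sub α β h.1⟩ ⟨α'.1 - β'.1, mdeg_sub α' β' h.2⟩
      else 0

/-- Change the degree parameter of a multi-index along an equality of natural numbers. -/
def recast {n a b : ℕ} (h : a = b) (α : MIdx n a) : MIdx n b := ⟨α.1, h ▸ α.2⟩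

/-- The ordinary matrix product. -/
def mmul {n n' p q q' : ℕ} {F : Type*} [RCLike F]
    (A : MMat n n p q F) (B : MMat n n' q q' F) : MMat n n' p q' F :=
  fun α α' => ∑ β : MIdx n q, A α β * B β α'

/-- The `m`-th `⊙`-power of a row `h ∈ M(0,1;F)`. -/
def opowRow {n : ℕ} {F : Type*} [RCLike F] (h : MMat n n 0 1 F) : (m : ℕ) → MMat n n 0 m F
  | 0 => fun _ _ => 1
  | m + 1 => fun z α => oprod h (opowRow h m) z (recast (Nat.add_comm m 1) α)

/-- The `m`-th `⊙`-power of a column `v ∈ M(1,0;F)`. -/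
def opowCol {n : ℕ} {F : Type*} [RCLike F] (v : MMat n n 1 0 F) : (m : ℕ) → MMat n n m 0 F
  | 0 => fun _ _ => 1
  | m + 1 => fun α z => oprod v (opowCol v m) (recast (Nat.add_comm m 1) α) z

/-- The `⊙`-product `h¹ ⊙ h² ⊙ ⋯ ⊙ hᵐ` of a family of rows `hⁱ ∈ M(0,1;F)`. -/
def oprodRowFamily {n : ℕ} {F : Type*} [RCLike F] :
    (m : ℕ) → (Fin m → MMat n n 0 1 F) → MMat n n 0 m F
  | 0, _ => fun _ _ => 1
  | m + 1, hs => fun z α =>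
      oprod (hs 0) (oprodRowFamily m fun i => hs i.succ) z (recast (Nat.add_comm m 1) α)

/-- The row vector `(h₁,…,hₙ) ∈ M(0,1;F)` determined by `h : Fin n → F`; its entry at the
degree-one column index `α'` is `h^{α'}`. -/
def rowOf {n : ℕ} {F : Type*} [RCLike F] (h : Fin n → F) : MMat n n 0 1 F :=
  fun _ α' => ∏ i, h i ^ α'.1 i

/-- The column vector `(v₁,…,vₙ) ∈ M(1,0;F)` determined by `v : Fin n → F`. -/
def colOf {n : ℕ} {F : Type*} [RCLike F] (v : Fin n → F) : MMat n n 1 0 F :=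
  fun α _ => ∏ i, v i ^ α.1 i

/-- The unit matrix `E_k ∈ M_{n,n}(k,k;F)`. -/
def unitMat (n k : ℕ) (F : Type*) [RCLike F] : MMat n n k k F :=
  fun α β => if α = β then 1 else 0

/-- The `ρ`-norm `‖A‖_ρ = (Σ_{α,α'} |A_{α,α'}|^ρ/(α!(p!p'!)^{ρ−1}))^{1/ρ}` on `M(p,p';F)`. -/
def rnorm {n n' p p' : ℕ} {F : Type*} [RCLike F] (ρ : ℝ) (A : MMat n n' p p' F) : ℝ :=
  (∑ α : MIdx n p, ∑ α' : MIdx n' p',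
      ‖A α α'‖ ^ ρ /
        ((mfact α.1 : ℝ) * ((p.factorial * p'.factorial : ℕ) : ℝ) ^ (ρ - 1))) ^ (1 / ρ)

/-- The `∞`-norm `‖A‖_∞ = sup_{α,α'} |A_{α,α'}| / (p!p'!)` on `M(p,p';F)`. -/
def rnormInf {n n' p p' : ℕ} {F : Type*} [RCLike F] (A : MMat n n' p p' F) : ℝ :=
  (⨆ x : MIdx n p × MIdx n' p', ‖A x.1 x.2‖) / ((p.factorial * p'.factorial : ℕ) : ℝ)

/-- The `σ`-norm of a vector in `F^n`, for a real exponent `σ`. -/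
def vnorm {n : ℕ} {F : Type*} [RCLike F] (σ : ℝ) (h : Fin n → F) : ℝ :=
  (∑ i, ‖h i‖ ^ σ) ^ (1 / σ)

/-- The `σ`-norm of a vector in `F^n`, for an extended real exponent `σ`
(`= max_i |h_i|` when `σ = ∞`). -/
def vnormE {n : ℕ} {F : Type*} [RCLike F] (σ : ℝ≥0∞) (h : Fin n → F) : ℝ :=
  if σ = ∞ then ⨆ i, ‖h i‖ else (∑ i, ‖h i‖ ^ σ.toReal) ^ (1 / σ.toReal)

/-- Absolute convergence of the power series `Σ_m x^{(m)}/m!·A(m)` at the point `h ∈ F^n`: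
for every column index `α'` of degree `q'`, the family `|h^α/α! · A(|α|)_{α,α'}|`, indexed by
all multi-indices `α ∈ ℕ^n`, is summable. -/
def AbsConvAt {n n' q' : ℕ} {F : Type*} [RCLike F]
    (A : (m : ℕ) → MMat n n' m q' F) (h : Fin n → F) : Prop :=
  ∀ α' : MIdx n' q', Summable fun α : Fin n → ℕ =>
    ‖(∏ i, h i ^ α i) / (mfact α : F) * A (mdeg α) ⟨α, rfl⟩ α'‖

/-- `r = limsup_m ‖A(m)‖_ρ^{1/m}`, the reciprocal of the radius of convergence,
computed in `ℝ≥0∞`. -/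
def convRadiusInv {n n' q' : ℕ} {F : Type*} [RCLike F] (ρ : ℝ)
    (A : (m : ℕ) → MMat n n' m q' F) : ℝ≥0∞ :=
  Filter.atTop.limsup fun m : ℕ => ENNReal.ofReal (rnorm ρ (A m)) ^ (1 / (m : ℝ))

/-- `r = limsup_m ‖A(m)‖_∞^{1/m}` computed in `ℝ≥0∞`. -/
def convRadiusInvInf {n n' q' : ℕ} {F : Type*} [RCLike F]
    (A : (m : ℕ) → MMat n n' m q' F) : ℝ≥0∞ :=
  Filter.atTop.limsup fun m : ℕ => ENNReal.ofReal (rnormInf (A m)) ^ (1 / (m : ℝ))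

/-! The pairs `(β, β')` of multi-indices form the additive monoid
`(Fin n → ℕ) × (Fin n' → ℕ)`, which has unique sums (think of a lexicographic order). So there
are `(β, β')` in the support of `A` and `(γ, γ')` in the support of `B` such that
`(β + γ, β' + γ')` is reached by no other pair of support elements; the entry of `A ⊙ B` there
reduces to a single term, a nonzero binomial coefficient times `A_{β,β'} B_{γ,γ'}`. It is the
argument showing that polynomial rings over a field are domains. -/

lemma mfact_pos {n : ℕ} (α : Fin n → ℕ) : 0 < mfact α :=
  Finset.prod_pos fun i _ => Nat.factorial_pos (α i)

def MIdx.add {n p q : ℕ} (β : MIdx n p) (γ : MIdx n q) : MIdx n (p + q) :=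
  ⟨β.1 + γ.1, by simp only [mdeg, Pi.add_apply, Finset.sum_add_distrib, ← β.2, ← γ.2]⟩

namespace MMat

variable {n n' p p' q q' : ℕ} {F : Type*}

open Classical in
def support [Zero F] (A : MMat n n' p p' F) : Finset ((Fin n → ℕ) × (Fin n' → ℕ)) :=
  (Finset.univ.filter fun x : MIdx n p × MIdx n' p' => A x.1 x.2 ≠ 0).image
    fun x => (x.1.1, x.2.1)

section Support

variable [Zero F] {A : MMat n n' p p' F}

lemma mem_support {β : MIdx n p} {β' : MIdx n' p'} (h : A β β' ≠ 0) :
    (β.1, β'.1) ∈ A.support := by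
  classical
  exact Finset.mem_image.mpr ⟨(β, β'), Finset.mem_filter.mpr ⟨Finset.mem_univ _, h⟩, rfl⟩

lemma exists_of_mem_support {x : (Fin n → ℕ) × (Fin n' → ℕ)} (hx : x ∈ A.support) :
    ∃ (β : MIdx n p) (β' : MIdx n' p'), (β.1, β'.1) = x ∧ A β β' ≠ 0 := by
  classical
  obtain ⟨⟨β, β'⟩, hβ, rfl⟩ := Finset.mem_image.mp hx
  exact ⟨β, β', rfl, (Finset.mem_filter.mp hβ).2⟩

lemma support_nonempty (hA : A ≠ 0) : A.support.Nonempty := by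
  contrapose! hA
  funext β β'
  by_contra h
  simpa [hA] using mem_support h

end Support

end MMat

section Oprod

variable {n n' p p' q q' : ℕ} {F : Type*} [RCLike F]

@[simp]
lemma oprod_zero_left (B : MMat n n' q q' F) : oprod (0 : MMat n n' p p' F) B = 0 := by
  funext α α'
  simp [oprod]

@[simp]
lemma oprod_zero_right (A : MMat n n' p p' F) : oprod A (0 : MMat n n' q q' F) = 0 := by
  funext α α'
  simp [oprod]

lemma oprod_apply_add_of_uniqueAdd {A : MMat n n' p p' F} {B : MMat n n' q q' F}
    {β : MIdx n p} {β' : MIdx n' p'} {γ : MIdx n q} {γ' : MIdx n' q'}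
    (h : UniqueAdd (MMat.support A) (MMat.support B) (β.1, β'.1) (γ.1, γ'.1)) :
    oprod A B (β.add γ) (β'.add γ') =
      (mfact (β.1 + γ.1) : F) / ((mfact β.1 : F) * (mfact γ.1 : F)) * A β β' * B γ γ' := by
  have hle : (∀ i, β.1 i ≤ (β.add γ).1 i) ∧ ∀ j, β'.1 j ≤ (β'.add γ').1 j :=
    ⟨fun i => Nat.le_add_right _ _, fun j => Nat.le_add_right _ _⟩
  rw [oprod, ← Fintype.sum_prod_type', Fintype.sum_eq_single (β, β')]
  · rw [dif_pos hle]
    simp only [MIdx.add, add_tsub_cancel_left]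
  rintro ⟨δ, δ'⟩ hne
  split_ifs with hδ
  · by_contra hterm
    simp only [mul_eq_zero, not_or] at hterm
    have hsum : (δ.1, δ'.1) + ((β.add γ).1 - δ.1, (β'.add γ').1 - δ'.1) =
        (β.1, β'.1) + (γ.1, γ'.1) :=
      Prod.ext (add_tsub_cancel_of_le hδ.1) (add_tsub_cancel_of_le hδ.2)
    obtain ⟨hδβ, -⟩ := h (MMat.mem_support hterm.1.2) (MMat.mem_support hterm.2) hsum
    rw [Prod.mk.injEq] at hδβ
    exact hne (Prod.ext (Subtype.ext hδβ.1) (Subtype.ext hδβ.2))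
  · rfl

end Oprod

theorem oprod_eq_zero_iff_general {n n' p p' q q' : ℕ} {F : Type*} [RCLike F]
    (A : MMat n n' p p' F) (B : MMat n n' q q' F) :
    oprod A B = 0 ↔ A = 0 ∨ B = 0 := by
  refine ⟨fun hAB => ?_, by rintro (rfl | rfl) <;> simp⟩
  by_contra! hne
  obtain ⟨_, ha, _, hb, huniq⟩ :=
    UniqueSums.uniqueAdd_of_nonempty (MMat.support_nonempty hne.1) (MMat.support_nonempty hne.2)
  obtain ⟨β, β', rfl, hAβ⟩ := MMat.exists_of_mem_support ha
  obtain ⟨γ, γ', rfl, hBγ⟩ := MMat.exists_of_mem_support hb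
  have hentry := congrFun (congrFun hAB (β.add γ)) (β'.add γ')
  rw [oprod_apply_add_of_uniqueAdd huniq] at hentry
  have hcoef : (mfact (β.1 + γ.1) : F) / ((mfact β.1 : F) * (mfact γ.1 : F)) ≠ 0 := by
    simp only [ne_eq, div_eq_zero_iff, mul_eq_zero, Nat.cast_eq_zero, (mfact_pos _).ne',
      or_self, not_false_eq_true]
  exact mul_ne_zero (mul_ne_zero hcoef hAβ) hBγ hentry

/-- The product `⊙` has no zero divisors: `A⊙B = 0 ↔ A = 0 ∨ B = 0`. -/
theorem oprod_eq_zero_iff {n n' p p' q q' : ℕ} {F : Type*} [RCLike F] (hn : 0 < n) (hn' : 0 < n')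
    (A : MMat n n' p p' F) (B : MMat n n' q q' F) :
    oprod A B = 0 ↔ A = 0 ∨ B = 0 :=
  oprod_eq_zero_iff_general A B

end
end

section
/- For every real ρ ≥ 1 and all nonnegative integers p, p', q, q', there exists a positive real number λ = λ(p,p',q,q') such that for all A ∈ M(p,p';F) and B ∈ M(q,q';F) one has λ·‖A‖_ρ·‖B‖_ρ ≤ ‖A⊙B‖_ρ. -/
open scoped BigOperators ENNReal

noncomputable section

/-!
The unit spheres of the finite-dimensional spaces `M(p,p';F)` are compact and both `‖·‖_ρ` and
`(A, B) ↦ ‖A⊙B‖_ρ` are continuous and homogeneous in each argument, so the bound follows once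
`A⊙B ≠ 0` for all nonzero `A` and `B`. That holds because `A ↦ Σ A_{α,α'} x^α y^{α'} / α!`
turns `⊙` into the product of polynomials in `F[x, y]`, which has no zero divisors.
-/

section Homogeneous

variable {𝕜 E E' : Type*} [RCLike 𝕜] [NormedAddCommGroup E] [NormedSpace 𝕜 E]
  [NormedAddCommGroup E'] [NormedSpace 𝕜 E']

lemma apply_eq_norm_mul_apply_inv_norm_smul {g : E → ℝ}
    (hg : ∀ (c : 𝕜) x, g (c • x) = ‖c‖ * g x) (x : E) :
    g x = ‖x‖ * g ((‖x‖⁻¹ : 𝕜) • x) := by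
  rw [hg, norm_inv, RCLike.norm_ofReal, abs_norm, ← mul_assoc]
  rcases eq_or_ne x 0 with rfl | hx
  · simpa using hg 0 0
  · rw [mul_inv_cancel₀ (norm_ne_zero_iff.2 hx), one_mul]

lemma inv_norm_smul_mem_sphere {x : E} (hx : x ≠ 0) :
    (‖x‖⁻¹ : 𝕜) • x ∈ Metric.sphere (0 : E) 1 := by
  simpa using norm_smul_inv_norm (𝕜 := 𝕜) hx

lemma exists_pos_le_mul_norm [ProperSpace E] {g : E → ℝ} (hcont : Continuous g)
    (hg : ∀ (c : 𝕜) x, g (c • x) = ‖c‖ * g x) :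
    ∃ C, 0 < C ∧ ∀ x, g x ≤ C * ‖x‖ := by
  obtain ⟨C, hC⟩ := (isCompact_sphere (0 : E) 1).exists_bound_of_continuousOn hcont.continuousOn
  refine ⟨max C 1, by positivity, fun x => ?_⟩
  rcases eq_or_ne x 0 with rfl | hx
  · simpa using (hg 0 0).le
  · rw [apply_eq_norm_mul_apply_inv_norm_smul hg x, mul_comm]
    have hu := hC _ (inv_norm_smul_mem_sphere (𝕜 := 𝕜) hx)
    exact mul_le_mul_of_nonneg_right ((le_abs_self _).trans (hu.trans (le_max_left _ _)))
      (norm_nonneg x)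

lemma exists_pos_mul_norm_mul_norm_le [ProperSpace E] [ProperSpace E'] {f : E → E' → ℝ}
    (hcont : Continuous (Function.uncurry f))
    (hf : ∀ (a b : 𝕜) x y, f (a • x) (b • y) = ‖a‖ * ‖b‖ * f x y)
    (hpos : ∀ x y, x ≠ 0 → y ≠ 0 → 0 < f x y) :
    ∃ c, 0 < c ∧ ∀ x y, c * (‖x‖ * ‖y‖) ≤ f x y := by
  have hK := (isCompact_sphere (0 : E) 1).prod (isCompact_sphere (0 : E') 1)
  obtain ⟨c, hc, hcK⟩ := hK.exists_forall_le' hcont.continuousOn fun z hz =>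
    hpos z.1 z.2 (ne_zero_of_mem_unit_sphere ⟨_, hz.1⟩) (ne_zero_of_mem_unit_sphere ⟨_, hz.2⟩)
  refine ⟨c, hc, fun x y => ?_⟩
  have hscale : f x y = ‖x‖ * ‖y‖ * f ((‖x‖⁻¹ : 𝕜) • x) ((‖y‖⁻¹ : 𝕜) • y) := by
    rw [apply_eq_norm_mul_apply_inv_norm_smul (g := (f · y)) (fun a x => by simpa using hf a 1 x y),
      apply_eq_norm_mul_apply_inv_norm_smul (g := f _) (fun b y => by simpa using hf 1 b _ y) y,
      mul_assoc]
  rcases eq_or_ne x 0 with rfl | hx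
  · simp [hscale]
  rcases eq_or_ne y 0 with rfl | hy
  · simp [hscale]
  rw [hscale, mul_comm c]
  exact mul_le_mul_of_nonneg_left (hcK (_, _) ⟨inv_norm_smul_mem_sphere hx,
    inv_norm_smul_mem_sphere hy⟩) (by positivity)

end Homogeneous

lemma mfact_cast_ne_zero {n : ℕ} {F : Type*} [RCLike F] (α : Fin n → ℕ) : (mfact α : F) ≠ 0 :=
  Nat.cast_ne_zero.2 (mfact_pos α).ne'

lemma mdeg_add {n : ℕ} (α β : Fin n → ℕ) : mdeg (α + β) = mdeg α + mdeg β := by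
  simp [mdeg, Finset.sum_add_distrib]

section Rnorm

variable {n n' p p' : ℕ} {F : Type*} [RCLike F] {ρ : ℝ}

lemma rnorm_weight_pos (α : MIdx n p) :
    0 < (mfact α.1 : ℝ) * ((p.factorial * p'.factorial : ℕ) : ℝ) ^ (ρ - 1) := by
  have := mfact_pos α.1
  positivity

lemma rnorm_nonneg (A : MMat n n' p p' F) : 0 ≤ rnorm ρ A := by
  unfold rnorm
  positivity

lemma rnorm_pos {A : MMat n n' p p' F} (hA : A ≠ 0) : 0 < rnorm ρ A := by
  obtain ⟨α, hα⟩ := Function.ne_iff.1 hA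
  obtain ⟨α', hα'⟩ := Function.ne_iff.1 hα
  refine Real.rpow_pos_of_pos
    (Finset.sum_pos' (fun _ _ => by positivity) ⟨α, Finset.mem_univ _, ?_⟩) _
  refine Finset.sum_pos' (fun _ _ => by positivity) ⟨α', Finset.mem_univ _, ?_⟩
  exact div_pos (Real.rpow_pos_of_pos (norm_pos_iff.2 hα') _) (rnorm_weight_pos α)

lemma rnorm_smul (hρ : ρ ≠ 0) (c : F) (A : MMat n n' p p' F) :
    rnorm ρ (c • A) = ‖c‖ * rnorm ρ A := by
  simp only [rnorm, Pi.smul_apply, norm_smul, Real.mul_rpow (norm_nonneg c) (norm_nonneg _),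
    mul_div_assoc, ← Finset.mul_sum]
  rw [Real.mul_rpow (by positivity) (by positivity), ← Real.rpow_mul (norm_nonneg c),
    mul_one_div_cancel hρ, Real.rpow_one]

lemma continuous_rnorm (hρ : 0 < ρ) : Continuous (rnorm ρ : MMat n n' p p' F → ℝ) := by
  refine (Real.continuous_rpow_const (by positivity)).comp ?_
  refine continuous_finsetSum _ fun α _ => continuous_finsetSum _ fun α' _ => ?_
  exact ((continuous_apply_apply α α').norm.rpow_const fun _ => Or.inr hρ.le).div_const _

end Rnorm

section Oprod

variable {n n' p p' q q' : ℕ} {F : Type*} [RCLike F]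

lemma oprod_smul_smul (a b : F) (A : MMat n n' p p' F) (B : MMat n n' q q' F) :
    oprod (a • A) (b • B) = (a * b) • oprod A B := by
  funext α α'
  simp only [oprod, Pi.smul_apply, smul_eq_mul, Finset.mul_sum]
  refine Finset.sum_congr rfl fun β _ => Finset.sum_congr rfl fun β' _ => ?_
  split_ifs <;> ring

lemma continuous_oprod :
    Continuous fun x : MMat n n' p p' F × MMat n n' q q' F => oprod x.1 x.2 := by
  refine continuous_pi fun α => continuous_pi fun α' => ?_
  refine continuous_finsetSum _ fun β _ => continuous_finsetSum _ fun β' _ => ?_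
  split_ifs
  · fun_prop
  · exact continuous_const

def joinExp (α : Fin n → ℕ) (α' : Fin n' → ℕ) : Fin n ⊕ Fin n' →₀ ℕ :=
  Finsupp.equivFunOnFinite.symm (Sum.elim α α')

lemma joinExp_add (α β : Fin n → ℕ) (α' β' : Fin n' → ℕ) :
    joinExp (α + β) (α' + β') = joinExp α α' + joinExp β β' := by
  ext (_ | _) <;> rfl

lemma joinExp_inj {α β : Fin n → ℕ} {α' β' : Fin n' → ℕ} :
    joinExp α α' = joinExp β β' ↔ α = β ∧ α' = β' := by
  rw [joinExp, joinExp, Equiv.apply_eq_iff_eq, Sum.elim_eq_iff]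

def genPoly (A : MMat n n' p p' F) : MvPolynomial (Fin n ⊕ Fin n') F :=
  ∑ x : MIdx n p × MIdx n' p',
    MvPolynomial.monomial (joinExp x.1.1 x.2.1) (A x.1 x.2 / mfact x.1.1)

lemma coeff_genPoly (A : MMat n n' p p' F) (α : MIdx n p) (α' : MIdx n' p') :
    (genPoly A).coeff (joinExp α.1 α'.1) = A α α' / mfact α.1 := by
  simp only [genPoly, MvPolynomial.coeff_sum, MvPolynomial.coeff_monomial, joinExp_inj,
    ← Subtype.ext_iff]
  simp [Fintype.sum_prod_type, ite_and]

lemma genPoly_eq_zero_iff {A : MMat n n' p p' F} : genPoly A = 0 ↔ A = 0 := by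
  refine ⟨fun h => funext₂ fun α α' => ?_, fun h => by simp [h, genPoly]⟩
  have hcoeff := coeff_genPoly A α α'
  rw [h, MvPolynomial.coeff_zero, eq_comm, div_eq_zero_iff] at hcoeff
  exact hcoeff.resolve_right (mfact_cast_ne_zero α.1)

lemma sum_dite_le_eq_sum {M : Type*} [AddCommMonoid M] (b : MIdx n p × MIdx n' p')
    (φ : MIdx n q × MIdx n' q' → M) :
    ∑ d : MIdx n (p + q) × MIdx n' (p' + q'),
      (if h : (∀ i, b.1.1 i ≤ d.1.1 i) ∧ ∀ j, b.2.1 j ≤ d.2.1 j then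
        φ (⟨d.1.1 - b.1.1, mdeg_sub d.1 b.1 h.1⟩, ⟨d.2.1 - b.2.1, mdeg_sub d.2 b.2 h.2⟩) else 0) =
      ∑ c, φ c := by
  symm
  refine Finset.sum_of_injOn (fun c => (⟨b.1.1 + c.1.1, by rw [mdeg_add, b.1.2, c.1.2]⟩,
      ⟨b.2.1 + c.2.1, by rw [mdeg_add, b.2.2, c.2.2]⟩)) ?_ (fun _ _ => Finset.mem_univ _) ?_ ?_
  · intro c _ c' _ h
    simp only [Prod.mk.injEq, Subtype.mk.injEq, add_right_inj] at h
    exact Prod.ext (Subtype.ext h.1) (Subtype.ext h.2)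
  · rintro d - hd
    rw [dif_neg]
    rintro ⟨h, h'⟩
    refine hd ⟨(⟨d.1.1 - b.1.1, mdeg_sub d.1 b.1 h⟩, ⟨d.2.1 - b.2.1, mdeg_sub d.2 b.2 h'⟩),
      Finset.mem_coe.2 (Finset.mem_univ _), ?_⟩
    simp only [add_tsub_cancel_of_le (show b.1.1 ≤ d.1.1 from h),
      add_tsub_cancel_of_le (show b.2.1 ≤ d.2.1 from h')]
  · intro c _
    rw [dif_pos ⟨fun i => Nat.le_add_right _ _, fun j => Nat.le_add_right _ _⟩]
    simp only [add_tsub_cancel_left]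

lemma genPoly_oprod (A : MMat n n' p p' F) (B : MMat n n' q q' F) :
    genPoly (oprod A B) = genPoly A * genPoly B := by
  simp only [genPoly, Finset.sum_mul_sum, MvPolynomial.monomial_mul]
  rw [Finset.sum_congr rfl fun b _ => (sum_dite_le_eq_sum b _).symm, Finset.sum_comm]
  refine Finset.sum_congr rfl fun d _ => ?_
  rw [oprod, ← Fintype.sum_prod_type', Finset.sum_div, map_sum]
  refine Finset.sum_congr rfl fun b _ => ?_
  split_ifs with h
  · rw [← joinExp_add, add_tsub_cancel_of_le (show b.1.1 ≤ d.1.1 from h.1),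
      add_tsub_cancel_of_le (show b.2.1 ≤ d.2.1 from h.2)]
    have := mfact_cast_ne_zero (F := F) d.1.1
    have := mfact_cast_ne_zero (F := F) b.1.1
    have := mfact_cast_ne_zero (F := F) (d.1.1 - b.1.1)
    congr 1
    field_simp
  · simp

lemma oprod_ne_zero {A : MMat n n' p p' F} {B : MMat n n' q q' F} (hA : A ≠ 0) (hB : B ≠ 0) :
    oprod A B ≠ 0 := by
  rw [Ne, ← genPoly_eq_zero_iff, genPoly_oprod]
  exact mul_ne_zero (mt genPoly_eq_zero_iff.1 hA) (mt genPoly_eq_zero_iff.1 hB)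

end Oprod

theorem exists_pos_rnorm_oprod_lower_general {n n' : ℕ} {F : Type*} [RCLike F]
    (ρ : ℝ) (hρ : 1 ≤ ρ) (p p' q q' : ℕ) :
    ∃ lam : ℝ, 0 < lam ∧ ∀ (A : MMat n n' p p' F) (B : MMat n n' q q' F),
      lam * (rnorm ρ A * rnorm ρ B) ≤ rnorm ρ (oprod A B) := by
  have hρ0 : 0 < ρ := zero_lt_one.trans_le hρ
  obtain ⟨C, hC, hupA⟩ := exists_pos_le_mul_norm (E := MMat n n' p p' F)
    (continuous_rnorm hρ0) (rnorm_smul hρ0.ne')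
  obtain ⟨D, hD, hupB⟩ := exists_pos_le_mul_norm (E := MMat n n' q q' F)
    (continuous_rnorm hρ0) (rnorm_smul hρ0.ne')
  obtain ⟨c, hc, hlow⟩ := exists_pos_mul_norm_mul_norm_le (𝕜 := F)
    (f := fun (A : MMat n n' p p' F) (B : MMat n n' q q' F) => rnorm ρ (oprod A B))
    ((continuous_rnorm hρ0).comp continuous_oprod)
    (fun a b A B => by simp only [oprod_smul_smul, rnorm_smul hρ0.ne', norm_mul])
    (fun A B hA hB => rnorm_pos (oprod_ne_zero hA hB))
  refine ⟨c / (C * D), by positivity, fun A B => ?_⟩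
  calc c / (C * D) * (rnorm ρ A * rnorm ρ B)
      ≤ c / (C * D) * ((C * ‖A‖) * (D * ‖B‖)) := by
        gcongr
        exacts [rnorm_nonneg B, hupA A, hupB B]
    _ = c * (‖A‖ * ‖B‖) := by field_simp
    _ ≤ rnorm ρ (oprod A B) := hlow A B

/-- For every real `ρ ≥ 1` and all `p, p', q, q'`, there is a positive constant
`λ = λ(p,p',q,q')` with `λ·‖A‖_ρ·‖B‖_ρ ≤ ‖A⊙B‖_ρ` for all `A ∈ M(p,p';F)`, `B ∈ M(q,q';F)`. -/
theorem exists_pos_rnorm_oprod_lower {n n' : ℕ} {F : Type*} [RCLike F] (hn : 0 < n)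
    (hn' : 0 < n') (ρ : ℝ) (hρ : 1 ≤ ρ) (p p' q q' : ℕ) :
    ∃ lam : ℝ, 0 < lam ∧ ∀ (A : MMat n n' p p' F) (B : MMat n n' q q' F),
      lam * (rnorm ρ A * rnorm ρ B) ≤ rnorm ρ (oprod A B) :=
  exists_pos_rnorm_oprod_lower_general ρ hρ p p' q q'

end
end

section
/- Consider ρ = ∞, so the conjugate exponent is ϱ = 1. Set r = limsup_{m→∞} ‖A(m)‖_∞^{1/m} and R = 1/r (R = ∞ if r = 0), and assume R < ∞. Then for every real R₁ > R·n there exists h̄ ∈ F^n with ‖h̄‖_1 = R₁ such that the power series Σ_{m≥0} x^{(m)}/m!·A(m) is not absolutely convergent at h̄. -/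
open scoped BigOperators ENNReal

noncomputable section

lemma midx_nonempty {n : ℕ} (hn : 0 < n) (p : ℕ) : Nonempty (MIdx n p) :=
  ⟨⟨Pi.single ⟨0, hn⟩ p, by simp [mdeg, Finset.sum_pi_single']⟩⟩

lemma mfact_le_factorial {n : ℕ} (a : Fin n → ℕ) : mfact a ≤ (mdeg a).factorial :=
  Nat.le_of_dvd (Nat.factorial_pos _)
    (Nat.prod_factorial_dvd_factorial_sum Finset.univ a)

/-- For `ρ = ∞` (so `ϱ = 1`), with `r = limsup_m ‖A(m)‖_∞^{1/m}` and `R = 1/r`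
assumed finite, for every real `R₁ > R·n` there is `h̄ ∈ F^n` with `‖h̄‖_1 = R₁` at which the
power series `Σ_m x^{(m)}/m!·A(m)` is not absolutely convergent. -/
theorem exists_not_absConv_inf {n n' q' : ℕ} {F : Type*} [RCLike F] (hn : 0 < n) (hn' : 0 < n')
    (A : (m : ℕ) → MMat n n' m q' F)
    (hR : 1 / convRadiusInvInf A ≠ ∞) (R₁ : ℝ)
    (hR₁ : (1 / convRadiusInvInf A).toReal * (n : ℝ) < R₁) :
    ∃ hb : Fin n → F, (∑ i, ‖hb i‖) = R₁ ∧ ¬ AbsConvAt A hb := by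
  classical
  have hnR : (0:ℝ) < n := Nat.cast_pos.mpr hn
  have hR₁pos : 0 < R₁ := lt_of_le_of_lt (by positivity) hR₁
  set r := convRadiusInvInf A with hrdef
  have hr0 : r ≠ 0 := by
    intro h
    rw [h] at hR
    simp at hR
  set c : ℝ := (n : ℝ) / R₁ with hc
  have hcpos : 0 < c := by positivity
  have hcr : ENNReal.ofReal c < r := by
    rcases eq_or_ne r ∞ with h | h
    · rw [h]; exact ENNReal.ofReal_lt_top
    · have hrt : 0 < r.toReal := ENNReal.toReal_pos hr0 h
      have h1 : (1 / r).toReal = 1 / r.toReal := by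
        rw [one_div, one_div, ENNReal.toReal_inv]
      rw [h1] at hR₁
      have hlt : c < r.toReal := by
        rw [hc, div_lt_iff₀ hR₁pos]
        have e : 1 / r.toReal * n * r.toReal = n := by field_simp
        nlinarith [mul_lt_mul_of_pos_right hR₁ hrt]
      calc ENNReal.ofReal c < ENNReal.ofReal r.toReal :=
            (ENNReal.ofReal_lt_ofReal_iff hrt).mpr hlt
      _ = r := ENNReal.ofReal_toReal h
  refine ⟨fun _ => algebraMap ℝ F (R₁ / n), ?_, ?_⟩
  · have hnorm1 : ‖algebraMap ℝ F (R₁ / n)‖ = R₁ / n := by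
      rw [norm_algebraMap', Real.norm_eq_abs, abs_of_pos (by positivity)]
    simp only [hnorm1, Finset.sum_const, Finset.card_univ, Fintype.card_fin, nsmul_eq_mul]
    field_simp
  · intro habs
    set g : (Fin n → ℕ) → ℝ := fun α => ∑ α' : MIdx n' q',
      ‖(∏ i, (algebraMap ℝ F (R₁ / n)) ^ α i) / (mfact α : F) * A (mdeg α) ⟨α, rfl⟩ α'‖
      with hgdef
    have hgs : Summable g := summable_sum (fun α' _ => habs α')
    set C : ℝ := ∑' α, g α with hC
    have hgle : ∀ α, g α ≤ C :=
      fun α => Summable.le_tsum hgs α (fun b _ => Finset.sum_nonneg fun _ _ => norm_nonneg _)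
    have hC0 : 0 ≤ C := tsum_nonneg fun α => Finset.sum_nonneg fun _ _ => norm_nonneg _
    set K : ℝ := C / q'.factorial with hK
    have hK0 : 0 ≤ K := by positivity
    have key : ∀ m, rnormInf (A m) ≤ K * c ^ m := by
      intro m
      have hne1 : Nonempty (MIdx n m) := midx_nonempty hn m
      have hne2 : Nonempty (MIdx n' q') := midx_nonempty hn' q'
      have hne : Nonempty (MIdx n m × MIdx n' q') := ⟨(hne1.some, hne2.some)⟩
      obtain ⟨x, hx⟩ := Finite.exists_max (fun x : MIdx n m × MIdx n' q' => ‖A m x.1 x.2‖)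
      obtain ⟨⟨a, ha⟩, α'⟩ := x
      subst ha
      set X : ℝ := ‖A (mdeg a) ⟨a, rfl⟩ α'‖ with hX
      have hX0 : 0 ≤ X := norm_nonneg _
      have hnorm : ‖(∏ i, (algebraMap ℝ F (R₁ / n)) ^ a i) / (mfact a : F) *
          A (mdeg a) ⟨a, rfl⟩ α'‖ = (R₁/(n:ℝ))^(mdeg a) / (mfact a : ℝ) * X := by
        rw [norm_mul, norm_div]
        congr 2
        · calc ‖∏ i, (algebraMap ℝ F (R₁ / n)) ^ a i‖
              = ∏ i, ‖(algebraMap ℝ F (R₁ / n)) ^ a i‖ := norm_prod _ _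
          _ = ∏ i, (R₁/(n:ℝ)) ^ a i := by
              refine Finset.prod_congr rfl fun i _ => ?_
              rw [norm_pow, norm_algebraMap', Real.norm_eq_abs, abs_of_pos (by positivity)]
          _ = (R₁/(n:ℝ)) ^ (mdeg a) := by rw [Finset.prod_pow_eq_pow_sum]; rfl
        · exact RCLike.norm_natCast _
      have ht : (R₁/(n:ℝ))^(mdeg a) / (mfact a : ℝ) * X ≤ C := by
        rw [← hnorm]
        calc ‖(∏ i, (algebraMap ℝ F (R₁ / n)) ^ a i) / (mfact a : F) *
            A (mdeg a) ⟨a, rfl⟩ α'‖ ≤ g a := by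
              simp only [hgdef]
              exact Finset.single_le_sum
                (f := fun β : MIdx n' q' => ‖(∏ i, (algebraMap ℝ F (R₁ / n)) ^ a i) /
                  (mfact a : F) * A (mdeg a) ⟨a, rfl⟩ β‖)
                (fun i _ => norm_nonneg _) (Finset.mem_univ α')
        _ ≤ C := hgle a
      set p : ℝ := (R₁/(n:ℝ))^(mdeg a) with hp
      have hppos : 0 < p := by positivity
      set f : ℝ := (mfact a : ℝ) with hf
      have hfpos : 0 < f := by
        rw [hf]
        have : 0 < mfact a := Finset.prod_pos fun i _ => Nat.factorial_pos _
        exact_mod_cast this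
      set M : ℝ := ((mdeg a).factorial : ℝ) with hM
      have hMpos : 0 < M := by rw [hM]; exact_mod_cast Nat.factorial_pos (mdeg a)
      have hfM : f ≤ M := by rw [hf, hM]; exact_mod_cast mfact_le_factorial a
      set Q : ℝ := (q'.factorial : ℝ) with hQ
      have hQpos : 0 < Q := by rw [hQ]; exact_mod_cast Nat.factorial_pos q'
      have hXle : X ≤ C * M / p := by
        rw [le_div_iff₀ hppos]
        have h1 : X * p ≤ C * f := by
          have h2 := mul_le_mul_of_nonneg_right ht hfpos.le
          calc X * p = p / f * X * f := by field_simp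
          _ ≤ C * f := h2
        calc X * p ≤ C * f := h1
        _ ≤ C * M := by nlinarith
      have hsup : rnormInf (A (mdeg a)) ≤ X / (M * Q) := by
        unfold rnormInf
        have hcast : (((mdeg a).factorial * q'.factorial : ℕ) : ℝ) = M * Q := by push_cast; rfl
        rw [hcast]
        gcongr
        exact ciSup_le fun y => hx y
      have hcp : c ^ (mdeg a) = p⁻¹ := by
        rw [hp, hc, ← inv_pow]
        congr 1
        rw [inv_div]
      calc rnormInf (A (mdeg a)) ≤ X / (M * Q) := hsup
      _ ≤ (C * M / p) / (M * Q) := by gcongr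
      _ = K * c ^ (mdeg a) := by
          rw [hcp, hK]
          field_simp
    obtain ⟨x, hx1, hx2⟩ := exists_between hcr
    have hxtop : x ≠ ∞ := hx2.ne_top
    set c' : ℝ := x.toReal with hc'
    have hcc' : c < c' := by
      rw [hc', ← ENNReal.ofReal_lt_iff_lt_toReal hcpos.le hxtop]
      exact hx1
    have hc'pos : 0 < c' := lt_trans hcpos hcc'
    have hofc' : ENNReal.ofReal c' = x := ENNReal.ofReal_toReal hxtop
    have hev : ∀ᶠ m : ℕ in Filter.atTop, K * c ^ m ≤ c' ^ m := by
      have hlt : c / c' < 1 := (div_lt_one hc'pos).mpr hcc'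
      have h0 : Filter.Tendsto (fun m : ℕ => K * (c/c')^m) Filter.atTop (nhds 0) := by
        simpa using (tendsto_pow_atTop_nhds_zero_of_lt_one (by positivity) hlt).const_mul K
      filter_upwards [h0.eventually (eventually_le_nhds (by norm_num : (0:ℝ) < 1))] with m hm
      have hdm : (c/c')^m * c'^m = c^m := by
        rw [div_pow, div_mul_cancel₀ _ (pow_ne_zero m hc'pos.ne')]
      calc K * c^m = K * (c/c')^m * c'^m := by rw [mul_assoc, hdm]
      _ ≤ 1 * c'^m := mul_le_mul_of_nonneg_right hm (by positivity)
      _ = c'^m := one_mul _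
    have hlim : r ≤ ENNReal.ofReal c' := by
      rw [hrdef]
      unfold convRadiusInvInf
      refine Filter.limsup_le_of_le (by isBoundedDefault) ?_
      filter_upwards [hev, Filter.eventually_ge_atTop 1] with m hm hm1
      have hb : ENNReal.ofReal (rnormInf (A m)) ≤ ENNReal.ofReal c' ^ m := by
        calc ENNReal.ofReal (rnormInf (A m)) ≤ ENNReal.ofReal (c'^m) :=
              ENNReal.ofReal_le_ofReal ((key m).trans hm)
        _ = ENNReal.ofReal c' ^ m := ENNReal.ofReal_pow hc'pos.le m
      have hm0 : (m:ℝ) ≠ 0 := by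
        have : 0 < m := hm1
        positivity
      calc ENNReal.ofReal (rnormInf (A m)) ^ (1/(m:ℝ))
          ≤ (ENNReal.ofReal c' ^ m) ^ (1/(m:ℝ)) := ENNReal.rpow_le_rpow hb (by positivity)
      _ = ENNReal.ofReal c' := by
          rw [← ENNReal.rpow_natCast (ENNReal.ofReal c') m, ← ENNReal.rpow_mul,
            mul_one_div_cancel hm0, ENNReal.rpow_one]
    exact absurd (hlim.trans_lt (hofc' ▸ hx2)) (lt_irrefl r)

end
end
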